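/- arXiv:1709.09701 — 2 statements merged into one kernel-verified Lean document; each statement's English description precedes it below -/
import Mathlib

section
/- The discrete functional deformation field operator obtained by differentiating the discrete unified shape difference along the family of meshes p_i^t = p_i + t V_i at t = 0 coincides exactly with the discrete operator E^V built from the discrete Levi-Civita connection, i.e., d/dt|_{t=0} (W_M D_I^t) applied as a bilinear form on piecewise-linear functions equals fᵀ W_M E^V g = −Σ_T (L_V g)(∇f, ∇g)_T μ(T). -/
open Matrix

/-- The `3 × 2` edge matrix `E = (p_i − p_j, p_j − p_k)` of the triangle `T = (i,j,k)`
under the vertex embedding `p`. -/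
def faceE {n : ℕ} (p : Fin n → Fin 3 → ℝ) (T : Fin n × Fin n × Fin n) :
    Matrix (Fin 3) (Fin 2) ℝ :=
  Matrix.of fun r c => ![p T.1 - p T.2.1, p T.2.1 - p T.2.2] c r

/-- Edge differences `(f_i − f_j, f_j − f_k)` of a per-vertex function on triangle `T`. -/
def dF {n : ℕ} (f : Fin n → ℝ) (T : Fin n × Fin n × Fin n) : Fin 2 → ℝ :=
  ![f T.1 - f T.2.1, f T.2.1 - f T.2.2]

/-- Coordinates of the piecewise-constant tangential gradient of `f` on `T`:
`(EᵀE)⁻¹ dF`. -/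
noncomputable def gradCoeff {n : ℕ} (p : Fin n → Fin 3 → ℝ) (f : Fin n → ℝ)
    (T : Fin n × Fin n × Fin n) : Fin 2 → ℝ :=
  ((faceE p T)ᵀ * faceE p T)⁻¹ *ᵥ dF f T

/-- The gradient of `f` on triangle `T`, as a vector of `ℝ³`. -/
noncomputable def gradVec {n : ℕ} (p : Fin n → Fin 3 → ℝ) (f : Fin n → ℝ)
    (T : Fin n × Fin n × Fin n) : Fin 3 → ℝ :=
  faceE p T *ᵥ gradCoeff p f T

/-- Cross product of vectors in `ℝ³`. -/
def crossP (u v : Fin 3 → ℝ) : Fin 3 → ℝ :=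
  ![u 1 * v 2 - u 2 * v 1, u 2 * v 0 - u 0 * v 2, u 0 * v 1 - u 1 * v 0]

/-- Area `μ(T)` of the triangle `T` under the embedding `p`. -/
noncomputable def faceArea {n : ℕ} (p : Fin n → Fin 3 → ℝ)
    (T : Fin n × Fin n × Fin n) : ℝ :=
  Real.sqrt (∑ r, (crossP (p T.1 - p T.2.1) (p T.2.1 - p T.2.2) r) ^ 2) / 2

/-- The discrete strain tensor `(L_V g)(∇f, ∇g)_T` on triangle `T`, built from the
finite-difference connection `∇̄_E V = (V_i − V_j, V_j − V_k)`. -/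
noncomputable def strainOnGrads {n : ℕ} (p V : Fin n → Fin 3 → ℝ) (f g : Fin n → ℝ)
    (T : Fin n × Fin n × Fin n) : ℝ :=
  gradVec p f T ⬝ᵥ (faceE V T *ᵥ gradCoeff p g T) +
    (faceE V T *ᵥ gradCoeff p f T) ⬝ᵥ gradVec p g T

/-! On a face with edge matrix `E` and Gram matrix `G = EᵀE`, the gradient of `f` is
`E G⁻¹ df`, so `⟨∇f, ∇g⟩ = dfᵀ G⁻¹ dg` and the deformation enters only through `G⁻¹`.
Along `E_t = E + t W`, with `W` the edge matrix of `V`, one has `Ġ = EᵀW + WᵀE`, so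
`d/dt G_t⁻¹ = -G⁻¹ Ġ G⁻¹` at `t = 0`; and `dfᵀ G⁻¹ Ġ G⁻¹ dg` is exactly the strain
`⟨∇f, W α_g⟩ + ⟨W α_f, ∇g⟩`. Since the areas are those of the undeformed mesh, the sum
over faces is differentiated term by term. -/

section MatrixCalculus

attribute [local instance] Matrix.linftyOpNormedRing Matrix.linftyOpNormedAlgebra

variable {𝕜 : Type*} [NontriviallyNormedField 𝕜] {n : Type*} [Fintype n] [DecidableEq n]

theorem HasDerivAt.dotProduct_mulVec [CompleteSpace 𝕜] {N : 𝕜 → Matrix n n 𝕜}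
    {N' : Matrix n n 𝕜} {x : 𝕜} (hN : HasDerivAt N N' x) (u v : n → 𝕜) :
    HasDerivAt (fun t => u ⬝ᵥ (N t *ᵥ v)) (u ⬝ᵥ (N' *ᵥ v)) x := by
  let L : Matrix n n 𝕜 →ₗ[𝕜] 𝕜 :=
    { toFun := fun N => u ⬝ᵥ (N *ᵥ v)
      map_add' := fun N₁ N₂ => by simp only [add_mulVec, dotProduct_add]
      map_smul' := fun c N => by simp only [smul_mulVec, dotProduct_smul, RingHom.id_apply] }
  exact L.toContinuousLinearMap.hasFDerivAt.comp_hasDerivAt x hN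

theorem HasDerivAt.matrix_inv [CompleteSpace 𝕜] {M : 𝕜 → Matrix n n 𝕜} {M' : Matrix n n 𝕜}
    {x : 𝕜} (hM : HasDerivAt M M' x) (hx : IsUnit (M x).det) :
    HasDerivAt (fun t => (M t)⁻¹) (-((M x)⁻¹ * M' * (M x)⁻¹)) x := by
  -- `Matrix` carries the product uniformity by default, not the one of the operator norm.
  have : @CompleteSpace (Matrix n n 𝕜) PseudoMetricSpace.toUniformSpace :=
    FiniteDimensional.complete 𝕜 _
  have hunit : IsUnit (M x) := (isUnit_iff_isUnit_det _).2 hx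
  have h := (hasFDerivAt_ringInverse (𝕜 := 𝕜) hunit.unit).comp_hasDerivAt x hM
  rw [show (fun t => (M t)⁻¹) = Ring.inverse ∘ M from
    funext fun t => nonsing_inv_eq_ringInverse (M t)]
  refine h.congr_deriv ?_
  simp [coe_units_inv]

theorem hasDerivAt_transpose_add_smul_mul_add_smul {m : Type*} [Fintype m]
    (A W : Matrix m n 𝕜) :
    HasDerivAt (fun t : 𝕜 => (A + t • W)ᵀ * (A + t • W)) (Aᵀ * W + Wᵀ * A) 0 := by
  have expand : ∀ t : 𝕜, (A + t • W)ᵀ * (A + t • W)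
      = Aᵀ * A + t • (Aᵀ * W + Wᵀ * A) + t ^ 2 • (Wᵀ * W) := fun t => by
    simp only [transpose_add, transpose_smul, Matrix.add_mul, Matrix.mul_add, Matrix.smul_mul,
      Matrix.mul_smul, smul_smul, smul_add, pow_two]
    abel
  simp only [expand]
  refine ((((hasDerivAt_id 0).smul_const _).const_add _).add
    ((hasDerivAt_pow 2 0).smul_const _)).congr_deriv ?_
  simp

end MatrixCalculus

section Gram

variable {R : Type*} [CommRing R] {l m n : Type*} [Fintype l] [Fintype m]

theorem Matrix.transpose_mul_mul_mul (A B : Matrix l m R) (G : Matrix m n R) :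
    (A * G)ᵀ * (B * G) = Gᵀ * (Aᵀ * B) * G := by
  simp only [transpose_mul, Matrix.mul_assoc]

variable [Fintype n]

theorem Matrix.mulVec_dotProduct_mulVec (A : Matrix l m R) (B : Matrix l n R) (x : m → R)
    (y : n → R) : (A *ᵥ x) ⬝ᵥ (B *ᵥ y) = x ⬝ᵥ ((Aᵀ * B) *ᵥ y) := by
  rw [← mulVec_mulVec, dotProduct_mulVec x, vecMul_transpose]

variable [DecidableEq n]

theorem Matrix.transpose_nonsing_inv_transpose_mul_self (A : Matrix m n R) :
    (Aᵀ * A)⁻¹ᵀ = (Aᵀ * A)⁻¹ := by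
  rw [transpose_nonsing_inv, transpose_mul, transpose_transpose]

/-- Also true for singular `G`, where `G⁻¹ = 0`. -/
theorem Matrix.nonsing_inv_mul_mul_nonsing_inv (G : Matrix n n R) : G⁻¹ * G * G⁻¹ = G⁻¹ := by
  by_cases h : IsUnit G.det
  · rw [nonsing_inv_mul G h, Matrix.one_mul]
  · rw [nonsing_inv_apply_not_isUnit G h, Matrix.mul_zero]

end Gram

section Mesh

variable {n : ℕ} (p V : Fin n → Fin 3 → ℝ) (f g : Fin n → ℝ) (T : Fin n × Fin n × Fin n)

theorem faceE_add_smul (t : ℝ) :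
    faceE (fun i => p i + t • V i) T = faceE p T + t • faceE V T := by
  ext r c
  fin_cases c <;>
    simp only [faceE, of_apply, smul_of, Matrix.add_apply, Fin.zero_eta, Fin.mk_one, cons_val_zero,
      cons_val_one, cons_val_fin_one, Pi.add_apply, Pi.sub_apply, Pi.smul_apply, smul_eq_mul] <;>
    ring

theorem gradVec_eq_mulVec :
    gradVec p f T = (faceE p T * ((faceE p T)ᵀ * faceE p T)⁻¹) *ᵥ dF f T := by
  rw [gradVec, gradCoeff, mulVec_mulVec]

theorem gradVec_dotProduct_gradVec :
    gradVec p f T ⬝ᵥ gradVec p g T = dF f T ⬝ᵥ (((faceE p T)ᵀ * faceE p T)⁻¹ *ᵥ dF g T) := by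
  rw [gradVec_eq_mulVec, gradVec_eq_mulVec, mulVec_dotProduct_mulVec, transpose_mul_mul_mul,
    transpose_nonsing_inv_transpose_mul_self, nonsing_inv_mul_mul_nonsing_inv]

theorem strainOnGrads_eq :
    strainOnGrads p V f g T = dF f T ⬝ᵥ
      ((((faceE p T)ᵀ * faceE p T)⁻¹ * ((faceE p T)ᵀ * faceE V T + (faceE V T)ᵀ * faceE p T) *
        ((faceE p T)ᵀ * faceE p T)⁻¹) *ᵥ dF g T) := by
  rw [strainOnGrads, gradVec_eq_mulVec, gradVec_eq_mulVec, gradCoeff, gradCoeff, mulVec_mulVec,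
    mulVec_mulVec, mulVec_dotProduct_mulVec, mulVec_dotProduct_mulVec, transpose_mul_mul_mul,
    transpose_mul_mul_mul, transpose_nonsing_inv_transpose_mul_self, ← dotProduct_add,
    ← add_mulVec, ← Matrix.add_mul, ← Matrix.mul_add]

theorem hasDerivAt_gradVec_dotProduct_gradVec (hT : IsUnit ((faceE p T)ᵀ * faceE p T).det) :
    HasDerivAt
      (fun t : ℝ =>
        gradVec (fun i => p i + t • V i) f T ⬝ᵥ gradVec (fun i => p i + t • V i) g T)
      (-strainOnGrads p V f g T) 0 := by
  simp only [gradVec_dotProduct_gradVec, faceE_add_smul]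
  rw [strainOnGrads_eq, ← dotProduct_neg, ← neg_mulVec]
  simpa using ((hasDerivAt_transpose_add_smul_mul_add_smul _ _).matrix_inv
    (by simpa using hT)).dotProduct_mulVec (dF f T) (dF g T)

end Mesh

/-- For a triangle mesh with vertices displaced along `p_i^t = p_i + tV_i`,
the bilinear form of the discrete unified shape difference,
`fᵀ W_M D_I^t g = Σ_T ⟨∇_t f, ∇_t g⟩ μ^0(T)` (gradients on the deformed mesh, areas on
the original mesh), has derivative at `t = 0` exactly equal to the bilinear form of the
connection-based discrete functional deformation field,
`fᵀ W_M E^V g = −Σ_T (L_V g)(∇f, ∇g)_T μ(T)`; i.e. the two discretizations coincide. -/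
theorem discrete_unified_shape_difference_derivative_eq_connection_discretization
    (n : ℕ) (F : Finset (Fin n × Fin n × Fin n))
    (p V : Fin n → Fin 3 → ℝ)
    (hnd : ∀ T ∈ F, IsUnit ((faceE p T)ᵀ * faceE p T).det)
    (f g : Fin n → ℝ) :
    HasDerivAt
      (fun t : ℝ => ∑ T ∈ F,
        (gradVec (fun i => p i + t • V i) f T ⬝ᵥ gradVec (fun i => p i + t • V i) g T) *
          faceArea p T)
      (-∑ T ∈ F, strainOnGrads p V f g T * faceArea p T) 0 := by
  rw [← Finset.sum_neg_distrib]
  simp only [← neg_mul]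
  exact HasDerivAt.fun_sum fun T hT =>
    (hasDerivAt_gradVec_dotProduct_gradVec p V f g T (hnd T hT)).mul_const _
end

section
/- Let φ : M' → M be a diffeomorphism and π : M → M a self-map; set ψ = φ^{-1} ∘ π ∘ φ. Then the unified shape difference of ψ equals the identity (i.e., ψ is an isometry of M') if and only if D_I^π C_π^{-1} D_I^φ C_π = D_I^φ, where C_π is the functional map of π and D_I^π, D_I^φ are the unified shape differences of π and φ. -/
/-!
Writing `D(W_E, W_F, C) = W_E⁻¹ C⁻¹ W_F C` for the shape difference of a functional map
`C : E ≃ F`, shape differences are multiplicative along composition: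
`D(C₁ ≫ C₂) = D(C₁) C₁⁻¹ D(C₂) C₁`. Since `Cφ ∘ Cπ = Cψ ∘ Cφ`, applying this rule to both
factorisations gives `D^π Cπ⁻¹ D^φ Cπ = D^φ Cφ⁻¹ D^ψ Cφ`, and as `D^φ` and `Cφ` are invertible
the right-hand side equals `D^φ` exactly when `D^ψ = Id`.
-/

section ShapeDifference

variable {R E F G : Type*} [CommSemiring R]
  [AddCommMonoid E] [Module R E] [AddCommMonoid F] [Module R F] [AddCommMonoid G] [Module R G]

/-- The unified shape difference `D_I^T` of a map `T` with functional map `C = C_T`, where the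
stiffness operators `WE`, `WF` represent the `H¹₀` inner products of the two function spaces. -/
def shapeDifference (WE : E ≃ₗ[R] E) (WF : F ≃ₗ[R] F) (C : E ≃ₗ[R] F) : E →ₗ[R] E :=
  WE.symm.toLinearMap ∘ₗ C.symm.toLinearMap ∘ₗ WF.toLinearMap ∘ₗ C.toLinearMap

theorem shapeDifference_injective (WE : E ≃ₗ[R] E) (WF : F ≃ₗ[R] F) (C : E ≃ₗ[R] F) :
    Function.Injective (shapeDifference WE WF C) :=
  WE.symm.injective.comp <| C.symm.injective.comp <| WF.injective.comp C.injective

theorem shapeDifference_trans (WE : E ≃ₗ[R] E) (WF : F ≃ₗ[R] F) (WG : G ≃ₗ[R] G)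
    (C₁ : E ≃ₗ[R] F) (C₂ : F ≃ₗ[R] G) :
    shapeDifference WE WG (C₁.trans C₂) =
      shapeDifference WE WF C₁ ∘ₗ C₁.symm.toLinearMap ∘ₗ shapeDifference WF WG C₂ ∘ₗ
        C₁.toLinearMap := by
  ext x
  simp [shapeDifference]

end ShapeDifference

/-- Let `φ : M' → M` be a diffeomorphism and `π : M → M` a self-map;
set `ψ = φ⁻¹ ∘ π ∘ φ`.  Then the unified shape difference of `ψ` equals the identity
(equivalently, `ψ` is an isometry of `M'`) if and only if
`D_I^π C_π⁻¹ D_I^φ C_π = D_I^φ`.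

Model: `FM`, `FM'` are the function spaces of `M` and `M'`; `WM`, `WM'` are the (invertible)
stiffness operators representing the `H¹₀` inner products; `Cφ : FM → FM'` and
`Cπ : FM → FM` are the (invertible) functional maps of `φ` and `π`, so that the functional
map of `ψ` is `Cψ = Cφ ∘ Cπ ∘ Cφ⁻¹`.  The unified shape difference of a map `T : N → M`
with functional map `C_T` is `D_I^T = W_M⁻¹ C_T⁻¹ W_N C_T`; these are the hypotheses
`hDφ`, `hDπ`, `hDψ`.  `IsIsomψ` is the statement that `ψ` is an isometry, which by
Proposition (`Thm:isometry`) is equivalent to `D_I^ψ = Id` (hypothesis `hiso`). -/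
theorem intrinsic_symmetrization_criterion
    {FM FM' : Type*} [AddCommGroup FM] [Module ℝ FM] [AddCommGroup FM'] [Module ℝ FM']
    (WM : FM ≃ₗ[ℝ] FM) (WM' : FM' ≃ₗ[ℝ] FM')
    (Cφ : FM ≃ₗ[ℝ] FM') (Cπ : FM ≃ₗ[ℝ] FM)
    (Cψ : FM' ≃ₗ[ℝ] FM')
    (hCψ : Cψ = (Cφ.symm.trans Cπ).trans Cφ)  -- Cψ = Cφ ∘ Cπ ∘ Cφ⁻¹
    (Dφ : FM →ₗ[ℝ] FM) (Dπ : FM →ₗ[ℝ] FM) (Dψ : FM' →ₗ[ℝ] FM')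
    (hDφ : Dφ = WM.symm.toLinearMap ∘ₗ Cφ.symm.toLinearMap ∘ₗ
      WM'.toLinearMap ∘ₗ Cφ.toLinearMap)
    (hDπ : Dπ = WM.symm.toLinearMap ∘ₗ Cπ.symm.toLinearMap ∘ₗ
      WM.toLinearMap ∘ₗ Cπ.toLinearMap)
    (hDψ : Dψ = WM'.symm.toLinearMap ∘ₗ Cψ.symm.toLinearMap ∘ₗ
      WM'.toLinearMap ∘ₗ Cψ.toLinearMap)
    (IsIsomψ : Prop)
    (hiso : IsIsomψ ↔ Dψ = LinearMap.id) :
    IsIsomψ ↔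
      (Dπ ∘ₗ Cπ.symm.toLinearMap ∘ₗ Dφ ∘ₗ Cπ.toLinearMap = Dφ) := by
  obtain rfl : Dφ = shapeDifference WM WM' Cφ := hDφ
  obtain rfl : Dπ = shapeDifference WM WM Cπ := hDπ
  obtain rfl : Dψ = shapeDifference WM' WM' Cψ := hDψ
  have hcomm : Cπ.trans Cφ = Cφ.trans Cψ := by
    ext x
    simp [hCψ]
  rw [hiso, ← shapeDifference_trans, hcomm, shapeDifference_trans,
    ← Cφ.symm.conj.injective.eq_iff, LinearEquiv.conj_id, LinearEquiv.symm_conj_apply,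
    ← LinearMap.cancel_left (shapeDifference_injective WM WM' Cφ), LinearMap.comp_id,
    LinearMap.comp_assoc]
end
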